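/- arXiv:1203.5625 — 4 statements merged into one kernel-verified Lean document; each statement's English description precedes it below -/
import Mathlib

section
/- Every set E of simple maps that is totally bounded with respect to the pseudometric d(s,t) = ∫ ‖s − t‖ is elementary: for every ε > 0 there exists δ > 0 such that ∫ ‖s‖ 1_A < ε for all s ∈ E and all measurable A with μ(A) < δ. -/
open MeasureTheory

/-- A set `C` of simple maps is elementary iff for every `ε > 0` there is
`δ > 0` such that `∫ ‖s‖ 1_A < ε` whenever `s ∈ C` and `μ A < δ`. -/
def Elementary {Ω E : Type*} [MeasurableSpace Ω] [NormedAddCommGroup E]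
    (μ : Measure Ω) (C : Set (SimpleFunc Ω E)) : Prop :=
  ∀ ε > (0 : ℝ), ∃ δ > (0 : ℝ), ∀ s ∈ C, ∀ A : Set Ω, MeasurableSet A →
    μ A < ENNReal.ofReal δ → ∫ x in A, ‖s x‖ ∂μ < ε

/-! A totally bounded set of simple maps is approximated in `L¹`, to any precision, by finite
sets of simple maps. A finite set of simple maps is uniformly bounded, say by `M`, so it is elementary
with `δ = ε / M`; and the triangle inequality
`∫_A ‖s‖ ≤ ∫ ‖s - t‖ + ∫_A ‖t‖` passes elementarity from the approximating sets to the
approximated one. -/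

namespace MeasureTheory

variable {Ω E : Type*} [MeasurableSpace Ω] [NormedAddCommGroup E] {μ : Measure Ω}

lemma SimpleFunc.exists_forall_norm_le_of_finite {T : Set (SimpleFunc Ω E)} (hT : T.Finite) :
    ∃ M, ∀ t ∈ T, ∀ x, ‖t x‖ ≤ M := by
  obtain ⟨M, hM⟩ := isBounded_iff_forall_norm_le.1
    (hT.biUnion fun t _ => t.finite_range).isBounded
  exact ⟨M, fun t ht x => hM _ (Set.mem_biUnion ht (Set.mem_range_self x))⟩

lemma elementary_of_forall_norm_le {T : Set (SimpleFunc Ω E)} {M : ℝ}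
    (hM : ∀ t ∈ T, ∀ x, ‖t x‖ ≤ M) : Elementary μ T := by
  intro ε hε
  set M' := max M 1
  have hM' : 0 < M' := lt_max_of_lt_right one_pos
  refine ⟨ε / M', by positivity, fun t ht A _ hμA => ?_⟩
  have hbound : ∀ x ∈ A, ‖‖t x‖‖ ≤ M' := fun x _ => by
    rw [norm_norm]; exact (hM t ht x).trans (le_max_left M 1)
  calc ∫ x in A, ‖t x‖ ∂μ ≤ ‖∫ x in A, ‖t x‖ ∂μ‖ := Real.le_norm_self _
    _ ≤ M' * μ.real A := norm_setIntegral_le_of_norm_le_const (hμA.trans_le le_top) hbound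
    _ < M' * (ε / M') := mul_lt_mul_of_pos_left (ENNReal.toReal_lt_of_lt_ofReal hμA) hM'
    _ = ε := by field_simp

lemma elementary_of_finite {T : Set (SimpleFunc Ω E)} (hT : T.Finite) : Elementary μ T :=
  let ⟨_, hM⟩ := SimpleFunc.exists_forall_norm_le_of_finite hT
  elementary_of_forall_norm_le hM

lemma setIntegral_norm_le_integral_norm_sub_add {f g : Ω → E} (hf : Integrable f μ)
    (hg : Integrable g μ) {A : Set Ω} (hA : MeasurableSet A) :
    ∫ x in A, ‖f x‖ ∂μ ≤ ∫ x, ‖f x - g x‖ ∂μ + ∫ x in A, ‖g x‖ ∂μ := by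
  have hfg : Integrable (fun x => ‖f x - g x‖) μ := (hf.sub hg).norm
  calc ∫ x in A, ‖f x‖ ∂μ ≤ ∫ x in A, (‖f x - g x‖ + ‖g x‖) ∂μ :=
        setIntegral_mono_on hf.norm.integrableOn (hfg.integrableOn.add hg.norm.integrableOn) hA
          fun x _ => (norm_le_norm_add_norm_sub' (f x) (g x)).trans_eq (add_comm _ _)
    _ = ∫ x in A, ‖f x - g x‖ ∂μ + ∫ x in A, ‖g x‖ ∂μ :=
        integral_add hfg.integrableOn hg.norm.integrableOn
    _ ≤ ∫ x, ‖f x - g x‖ ∂μ + ∫ x in A, ‖g x‖ ∂μ := by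
        grw [setIntegral_le_integral hfg (Filter.Eventually.of_forall fun x => norm_nonneg _)]

lemma elementary_of_forall_exists_elementary_approx [IsFiniteMeasure μ]
    {C : Set (SimpleFunc Ω E)}
    (happrox : ∀ ε > (0 : ℝ), ∃ T : Set (SimpleFunc Ω E), Elementary μ T ∧
      ∀ s ∈ C, ∃ t ∈ T, ∫ x, ‖s x - t x‖ ∂μ ≤ ε) :
    Elementary μ C := by
  intro ε hε
  obtain ⟨T, hT, hTC⟩ := happrox (ε / 2) (by positivity)
  obtain ⟨δ, hδ, hTδ⟩ := hT (ε / 2) (by positivity)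
  refine ⟨δ, hδ, fun s hs A hA hμA => ?_⟩
  obtain ⟨t, ht, hst⟩ := hTC s hs
  have := setIntegral_norm_le_integral_norm_sub_add
    (s.integrable_of_isFiniteMeasure (μ := μ)) t.integrable_of_isFiniteMeasure hA
  linarith [hTδ t ht A hA hμA]

end MeasureTheory

theorem stmt7_general {Ω E : Type*} [MeasurableSpace Ω] (μ : Measure Ω)
    [IsFiniteMeasure μ] [NormedAddCommGroup E]
    (C : Set (SimpleFunc Ω E))
    (htb : ∀ ε > (0 : ℝ), ∃ T : Set (SimpleFunc Ω E), T.Finite ∧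
      ∀ s ∈ C, ∃ t ∈ T, ∫ x, ‖s x - t x‖ ∂μ ≤ ε) :
    Elementary μ C :=
  elementary_of_forall_exists_elementary_approx fun ε hε =>
    let ⟨T, hT, hTC⟩ := htb ε hε
    ⟨T, elementary_of_finite hT, hTC⟩

/-- Every set of simple maps which is totally bounded for the pseudometric
`d(s,t) = ∫ ‖s − t‖` is elementary. -/
theorem stmt7 {Ω E : Type*} [MeasurableSpace Ω] (μ : Measure Ω)
    [IsFiniteMeasure μ] [NormedAddCommGroup E] [NormedSpace ℂ E]
    [CompleteSpace E] [TopologicalSpace.SeparableSpace E]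
    (C : Set (SimpleFunc Ω E))
    (htb : ∀ ε > (0 : ℝ), ∃ T : Set (SimpleFunc Ω E), T.Finite ∧
      ∀ s ∈ C, ∃ t ∈ T, ∫ x, ‖s x - t x‖ ∂μ ≤ ε) :
    Elementary μ C :=
  stmt7_general μ C htb
end

section
/- On every elementary set of simple maps, the uniformity of convergence in measure coincides with the uniformity induced by d(s,t) = ∫ ‖s − t‖; the key estimate is ∫ ‖s − t‖ ≤ ε μ(Ω) + ∫ ‖s − t‖ 1_{{‖s−t‖ ≥ ε}} for all ε > 0. -/
open MeasureTheory

/-!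
Split `∫ ‖u‖` along `A = {‖u‖ ≥ δ}`: off `A` the integrand is below `δ`, contributing at most
`δ μ(Ω)`, while once `μ A < δ` as well, `∫_A ‖u‖` is uniformly small for `u` ranging over an
elementary set. Applied to `u = s - t`, this needs the difference set of an
elementary set to be elementary, which follows from `‖s - t‖ ≤ ‖s‖ + ‖t‖`.
-/

open Set Pointwise

section

variable {Ω E : Type*} [MeasurableSpace Ω] [NormedAddCommGroup E] {μ : Measure Ω}

theorem integral_le_mul_measureReal_add_setIntegral [IsFiniteMeasure μ] {f : Ω → ℝ}
    (hf : Integrable f μ) {ε : ℝ} (hε : 0 ≤ ε) :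
    ∫ x, f x ∂μ ≤ ε * μ.real univ + ∫ x in {x | ε ≤ f x}, f x ∂μ := by
  set A := {x | ε ≤ f x}
  have hA : NullMeasurableSet A μ := nullMeasurableSet_le aemeasurable_const hf.aemeasurable
  have hcompl : ∫ x in Aᶜ, f x ∂μ ≤ ε * μ.real univ :=
    calc ∫ x in Aᶜ, f x ∂μ ≤ ∫ _ in Aᶜ, ε ∂μ :=
          setIntegral_mono_on_ae₀ hf.integrableOn integrableOn_const hA.compl
            (ae_of_all _ fun x (hx : ¬ε ≤ f x) => (not_le.1 hx).le)
      _ = μ.real Aᶜ * ε := setIntegral_const ε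
      _ ≤ ε * μ.real univ := by
          rw [mul_comm]
          exact mul_le_mul_of_nonneg_left (measureReal_mono (subset_univ _)) hε
  linarith [integral_add_compl₀ hA hf]

theorem Elementary.sub {C : Set (SimpleFunc Ω E)} (hC : Elementary μ C) :
    Elementary μ (C - C) := by
  intro ε hε
  obtain ⟨δ, hδ, hCδ⟩ := hC (ε / 2) (half_pos hε)
  refine ⟨δ, hδ, ?_⟩
  rintro _ ⟨s, hs, t, ht, rfl⟩ A hA hμA
  have : IsFiniteMeasure (μ.restrict A) :=
    isFiniteMeasure_restrict.2 (hμA.trans ENNReal.ofReal_lt_top).ne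
  have hs_int : IntegrableOn (fun x => ‖s x‖) A μ := s.integrable_of_isFiniteMeasure.norm
  have ht_int : IntegrableOn (fun x => ‖t x‖) A μ := t.integrable_of_isFiniteMeasure.norm
  calc ∫ x in A, ‖(s - t) x‖ ∂μ ≤ ∫ x in A, (‖s x‖ + ‖t x‖) ∂μ :=
        setIntegral_mono_on (s - t).integrable_of_isFiniteMeasure.norm (hs_int.add ht_int) hA
          fun x _ => norm_sub_le (s x) (t x)
    _ = ∫ x in A, ‖s x‖ ∂μ + ∫ x in A, ‖t x‖ ∂μ := integral_add hs_int ht_int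
    _ < ε / 2 + ε / 2 := add_lt_add (hCδ s hs A hA hμA) (hCδ t ht A hA hμA)
    _ = ε := add_halves ε

theorem Elementary.exists_integral_norm_lt_of_measure_lt [IsFiniteMeasure μ]
    {C : Set (SimpleFunc Ω E)} (hC : Elementary μ C) {ε : ℝ} (hε : 0 < ε) :
    ∃ δ > 0, ∀ u ∈ C, μ {x | δ ≤ ‖u x‖} < ENNReal.ofReal δ → ∫ x, ‖u x‖ ∂μ < ε := by
  obtain ⟨δ₁, hδ₁, hCδ₁⟩ := hC (ε / 2) (half_pos hε)
  set M := μ.real univ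
  have hM : 0 ≤ M := measureReal_nonneg
  set δ := min δ₁ (ε / (2 * (M + 1)))
  have hδ : 0 < δ := lt_min hδ₁ (by positivity)
  -- the `+ 1` only keeps the denominator positive when `μ = 0`
  have hδM : δ * M < ε / 2 :=
    calc δ * M ≤ ε / (2 * (M + 1)) * M := by gcongr; exact min_le_right _ _
      _ < ε / 2 := by
          rw [div_mul_eq_mul_div, div_lt_div_iff₀ (by positivity) two_pos]
          nlinarith
  refine ⟨δ, hδ, fun u hu hμ => ?_⟩
  have hA : MeasurableSet {x | δ ≤ ‖u x‖} := 
    measurableSet_le measurable_const (u.map norm).measurable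
  have hμA : μ {x | δ ≤ ‖u x‖} < ENNReal.ofReal δ₁ :=
    hμ.trans_le (ENNReal.ofReal_le_ofReal (min_le_left _ _))
  calc ∫ x, ‖u x‖ ∂μ ≤ δ * M + ∫ x in {x | δ ≤ ‖u x‖}, ‖u x‖ ∂μ :=
        integral_le_mul_measureReal_add_setIntegral u.integrable_of_isFiniteMeasure.norm hδ.le
    _ < ε / 2 + ε / 2 := add_lt_add hδM (hCδ₁ u hu _ hA hμA)
    _ = ε := add_halves ε

end

theorem stmt10_general {Ω E : Type*} [MeasurableSpace Ω] (μ : Measure Ω)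
    [IsFiniteMeasure μ] [NormedAddCommGroup E] :
    (∀ s t : SimpleFunc Ω E, ∀ ε > (0 : ℝ),
      ∫ x, ‖s x - t x‖ ∂μ ≤ ε * (μ Set.univ).toReal +
        ∫ x in {x | ε ≤ ‖s x - t x‖}, ‖s x - t x‖ ∂μ) ∧
    (∀ C : Set (SimpleFunc Ω E), Elementary μ C →
      ∀ ε > (0 : ℝ), ∃ δ > (0 : ℝ), ∀ s ∈ C, ∀ t ∈ C,
        μ {x | δ ≤ ‖s x - t x‖} < ENNReal.ofReal δ →
        ∫ x, ‖s x - t x‖ ∂μ < ε) := by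
  refine ⟨fun s t ε hε => ?_, fun C hC ε hε => ?_⟩
  · exact integral_le_mul_measureReal_add_setIntegral
      (s - t).integrable_of_isFiniteMeasure.norm hε.le
  · obtain ⟨δ, hδ, hCδ⟩ := hC.sub.exists_integral_norm_lt_of_measure_lt hε
    exact ⟨δ, hδ, fun s hs t ht => hCδ (s - t) (sub_mem_sub hs ht)⟩

/-- On an elementary set, the uniformity of convergence in measure coincides
with the `L¹` uniformity (rendered in ε-δ form); the key estimate is
`∫ ‖s − t‖ ≤ ε μ(Ω) + ∫_{‖s−t‖ ≥ ε} ‖s − t‖`. -/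
theorem stmt10 {Ω E : Type*} [MeasurableSpace Ω] (μ : Measure Ω)
    [IsFiniteMeasure μ] [NormedAddCommGroup E] [NormedSpace ℂ E]
    [CompleteSpace E] [TopologicalSpace.SeparableSpace E] :
    (∀ s t : SimpleFunc Ω E, ∀ ε > (0 : ℝ),
      ∫ x, ‖s x - t x‖ ∂μ ≤ ε * (μ Set.univ).toReal +
        ∫ x in {x | ε ≤ ‖s x - t x‖}, ‖s x - t x‖ ∂μ) ∧
    (∀ C : Set (SimpleFunc Ω E), Elementary μ C →
      ∀ ε > (0 : ℝ), ∃ δ > (0 : ℝ), ∀ s ∈ C, ∀ t ∈ C,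
        μ {x | δ ≤ ‖s x - t x‖} < ENNReal.ofReal δ →
        ∫ x, ‖s x - t x‖ ∂μ < ε) :=
  stmt10_general μ
end

section
/- The integral map ∫ : S(Ω,E) → E is uniformly continuous on every elementary set with respect to the uniformity of convergence in measure. -/
/-!
Split `Ω` along `A = {‖s - t‖ ≥ δ}`. On `A`, which has small measure, `‖s - t‖ ≤ ‖s‖ + ‖t‖` and
elementarity makes both integrals small; off `A` the integrand is below `δ`, so that part is at
most `δ μ(Ω)`. Choosing `δ` small for both purposes bounds `∫ ‖s - t‖`, which dominates
`‖∫ s - ∫ t‖`.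
-/

open MeasureTheory

namespace MeasureTheory

variable {Ω E : Type*} [MeasurableSpace Ω] [NormedAddCommGroup E] {μ : Measure Ω}

theorem SimpleFunc.measurableSet_le_norm_sub (s t : SimpleFunc Ω E) (δ : ℝ) :
    MeasurableSet {x | δ ≤ ‖s x - t x‖} :=
  ((s - t).map norm).measurableSet_preimage (Set.Ici δ)

theorem SimpleFunc.norm_integral_sub_le_integral_norm_sub [NormedSpace ℝ E]
    {s t : SimpleFunc Ω E} (hs : Integrable s μ) (ht : Integrable t μ) :
    ‖s.integral μ - t.integral μ‖ ≤ ∫ x, ‖s x - t x‖ ∂μ := by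
  have hst : Integrable (s - t) μ := by simpa only [SimpleFunc.coe_sub] using hs.sub ht
  calc ‖s.integral μ - t.integral μ‖ = ‖(s - t).integral μ‖ := by
        rw [SimpleFunc.integral_sub hs ht]
    _ ≤ ((s - t).map norm).integral μ := (s - t).norm_integral_le_integral_norm hst
    _ = ∫ x, ‖s x - t x‖ ∂μ := by
        rw [SimpleFunc.integral_eq_integral _ hst.norm]
        rfl

theorem integral_norm_sub_le_setIntegral_add_of_norm_sub_le_on_compl {f g : Ω → E}
    (hf : Integrable f μ) (hg : Integrable g μ) {A : Set Ω} (hA : MeasurableSet A)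
    (hAc : μ Aᶜ < ⊤) {δ : ℝ} (hδ : ∀ x ∈ Aᶜ, ‖f x - g x‖ ≤ δ) :
    ∫ x, ‖f x - g x‖ ∂μ ≤ (∫ x in A, ‖f x‖ ∂μ + ∫ x in A, ‖g x‖ ∂μ) + δ * μ.real Aᶜ := by
  have hfg : Integrable (fun x => ‖f x - g x‖) μ := (hf.sub hg).norm
  have hOnA : ∫ x in A, ‖f x - g x‖ ∂μ ≤ ∫ x in A, ‖f x‖ ∂μ + ∫ x in A, ‖g x‖ ∂μ := by
    rw [← integral_add hf.norm.restrict hg.norm.restrict]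
    exact integral_mono hfg.restrict (hf.norm.add hg.norm).restrict fun x => norm_sub_le _ _
  have hOffA : ∫ x in Aᶜ, ‖f x - g x‖ ∂μ ≤ δ * μ.real Aᶜ :=
    (le_abs_self _).trans <| norm_setIntegral_le_of_norm_le_const (f := fun x => ‖f x - g x‖) hAc
      fun x hx => by simpa only [norm_norm] using hδ x hx
  rw [← integral_add_compl hA hfg]
  exact add_le_add hOnA hOffA

end MeasureTheory

theorem stmt11_general {Ω E : Type*} [MeasurableSpace Ω] (μ : Measure Ω)
    [IsFiniteMeasure μ] [NormedAddCommGroup E] [NormedSpace ℂ E]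
    (C : Set (SimpleFunc Ω E)) (hC : Elementary μ C) :
    ∀ ε > (0 : ℝ), ∃ δ > (0 : ℝ), ∀ s ∈ C, ∀ t ∈ C,
      μ {x | δ ≤ ‖s x - t x‖} < ENNReal.ofReal δ →
      ‖s.integral μ - t.integral μ‖ < ε := by
  intro ε hε
  obtain ⟨η, hη, hsmall⟩ := hC (ε / 4) (by positivity)
  obtain ⟨c, hc, hcμ⟩ := exists_pos_mul_lt (half_pos hε) (μ.real Set.univ)
  refine ⟨min η c, lt_min hη hc, fun s hs t ht hA => ?_⟩
  set A := {x | min η c ≤ ‖s x - t x‖}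
  have hAmeas : MeasurableSet A := s.measurableSet_le_norm_sub t _
  have hAη : μ A < ENNReal.ofReal η :=
    hA.trans_le (ENNReal.ofReal_le_ofReal (min_le_left _ _))
  have hoff : min η c * μ.real Aᶜ < ε / 2 :=
    calc min η c * μ.real Aᶜ ≤ c * μ.real Set.univ := by
          gcongr
          · exact min_le_right _ _
          · exact measure_ne_top μ _
          · exact Set.subset_univ _
      _ < ε / 2 := by rwa [mul_comm]
  have hsμ := SimpleFunc.integrable_of_isFiniteMeasure (μ := μ) s
  have htμ := SimpleFunc.integrable_of_isFiniteMeasure (μ := μ) t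
  calc ‖s.integral μ - t.integral μ‖ ≤ ∫ x, ‖s x - t x‖ ∂μ :=
        SimpleFunc.norm_integral_sub_le_integral_norm_sub hsμ htμ
    _ ≤ (∫ x in A, ‖s x‖ ∂μ + ∫ x in A, ‖t x‖ ∂μ) + min η c * μ.real Aᶜ :=
        integral_norm_sub_le_setIntegral_add_of_norm_sub_le_on_compl hsμ htμ hAmeas
          (measure_lt_top μ _) fun _ hx => (not_le.mp (Set.notMem_of_mem_compl hx)).le
    _ < (ε / 4 + ε / 4) + ε / 2 := by
        gcongr
        exacts [hsmall s hs A hAmeas hAη, hsmall t ht A hAmeas hAη]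
    _ = ε := by ring

/-- The integral of simple maps is uniformly continuous on every elementary
set with respect to the uniformity of convergence in measure (ε-δ form). -/
theorem stmt11 {Ω E : Type*} [MeasurableSpace Ω] (μ : Measure Ω)
    [IsFiniteMeasure μ] [NormedAddCommGroup E] [NormedSpace ℂ E]
    [CompleteSpace E] [TopologicalSpace.SeparableSpace E]
    (C : Set (SimpleFunc Ω E)) (hC : Elementary μ C) :
    ∀ ε > (0 : ℝ), ∃ δ > (0 : ℝ), ∀ s ∈ C, ∀ t ∈ C,
      μ {x | δ ≤ ‖s x - t x‖} < ENNReal.ofReal δ →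
      ‖s.integral μ - t.integral μ‖ < ε :=
  stmt11_general μ C hC
end

section
/- Define L(Ω,E) as the union of the closures in measure of all elementary sets of simple maps. Then L(Ω,E) is a vector space containing S(Ω,E), and there is a unique linear extension of the simple-map integral to L(Ω,E) that is uniformly continuous (for convergence in measure) on the closure of every elementary set. -/
open MeasureTheory Filter Topology

/-- `f` is (Lebesgue) integrable, i.e. belongs to `L(Ω,E)`, iff it lies in the
closure in measure of some elementary set of simple maps. -/
def MemL {Ω E : Type*} [MeasurableSpace Ω] [NormedAddCommGroup E]
    (μ : Measure Ω) (f : Ω → E) : Prop :=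
  ∃ C : Set (SimpleFunc Ω E), Elementary μ C ∧
    ∃ s : ℕ → SimpleFunc Ω E, (∀ n, s n ∈ C) ∧
      TendstoInMeasure μ (fun n => ⇑(s n)) atTop f

/-- `I` is an extension of the simple-map integral to `L(Ω,E)`: it agrees with
the simple integral, is linear on `L(Ω,E)`, and is (sequentially) continuous
for convergence in measure on the closure of each elementary set. -/
def IsIntegralExtension (𝕜 : Type*) {Ω E : Type*} [RCLike 𝕜]
    [MeasurableSpace Ω] [NormedAddCommGroup E] [NormedSpace 𝕜 E]
    [NormedSpace ℝ E] (μ : Measure Ω) (I : (Ω → E) → E) : Prop :=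
  (∀ s : SimpleFunc Ω E, I ⇑s = s.integral μ) ∧
  (∀ f g : Ω → E, MemL μ f → MemL μ g → I (f + g) = I f + I g) ∧
  (∀ (c : 𝕜) (f : Ω → E), MemL μ f → I (c • f) = c • I f) ∧
  (∀ C : Set (SimpleFunc Ω E), Elementary μ C →
    ∀ (s : ℕ → SimpleFunc Ω E) (f : Ω → E), (∀ n, s n ∈ C) → MemL μ f →
      TendstoInMeasure μ (fun n => ⇑(s n)) atTop f →
      Tendsto (fun n => I ⇑(s n)) atTop (𝓝 (I f)))

/-- A set `F` of integrable maps is uniformly integrable iff for every `ε > 0`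
there is `δ > 0` such that `∫ ‖f‖ 1_A < ε` whenever `f ∈ F` and `μ A < δ`. -/
def UnifInt {Ω E : Type*} [MeasurableSpace Ω] [NormedAddCommGroup E]
    (μ : Measure Ω) (F : Set (Ω → E)) : Prop :=
  ∀ ε > (0 : ℝ), ∃ δ > (0 : ℝ), ∀ f ∈ F, ∀ A : Set Ω, MeasurableSet A →
    μ A < ENNReal.ofReal δ → ∫ x in A, ‖f x‖ ∂μ < ε

open scoped ENNReal

/-!
An elementary set is the same thing as a uniformly integrable family of simple maps, so `L(Ω,E)`
consists of the limits in measure of uniformly integrable sequences of simple maps. Such a sequence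
is eventually bounded in `L¹` (off a set of small measure its terms stay close to each other), so
by Fatou its limit is Bochner integrable, and by Vitali's convergence theorem the Bochner
integrals converge. Hence the Bochner integral is an extension; it is the only one because any
extension is prescribed on simple maps and continuous along these sequences.
-/

namespace MeasureTheory

variable {Ω E : Type*} [MeasurableSpace Ω] {μ : Measure Ω} [NormedAddCommGroup E]

theorem setIntegral_norm_eq_toReal_eLpNorm_indicator {f : Ω → E} (hf : AEStronglyMeasurable f μ)
    {A : Set Ω} (hA : MeasurableSet A) :
    ∫ x in A, ‖f x‖ ∂μ = (eLpNorm (A.indicator f) 1 μ).toReal := by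
  rw [eLpNorm_indicator_eq_eLpNorm_restrict hA, eLpNorm_one_eq_lintegral_enorm,
    integral_norm_eq_lintegral_enorm hf.restrict]

section ConvergenceInMeasure

variable {ι : Type*} {l : Filter ι} {f g : ι → Ω → E} {F G : Ω → E}

theorem TendstoInMeasure.add (hf : TendstoInMeasure μ f l F) (hg : TendstoInMeasure μ g l G) :
    TendstoInMeasure μ (f + g) l (F + G) := by
  rw [tendstoInMeasure_iff_dist] at *
  intro ε hε
  have hsplit : ∀ i, μ {x | ε ≤ dist ((f + g) i x) ((F + G) x)} ≤
      μ {x | ε / 2 ≤ dist (f i x) (F x)} + μ {x | ε / 2 ≤ dist (g i x) (G x)} := by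
    refine fun i => (measure_mono fun x hx => ?_).trans (measure_union_le _ _)
    by_contra! hx'
    have := dist_add_add_le (f i x) (g i x) (F x) (G x)
    simp only [Set.mem_union, Set.mem_ofPred_eq, not_or, not_le, Pi.add_apply] at hx hx'
    linarith [hx'.1, hx'.2]
  refine tendsto_of_tendsto_of_tendsto_of_le_of_le tendsto_const_nhds ?_ (fun _ => zero_le)
    hsplit
  simpa using (hf _ (half_pos hε)).add (hg _ (half_pos hε))

theorem TendstoInMeasure.const_smul {𝕜 : Type*} [NormedField 𝕜] [NormedSpace 𝕜 E] (c : 𝕜)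
    (hf : TendstoInMeasure μ f l F) : TendstoInMeasure μ (c • f) l (c • F) := by
  rw [tendstoInMeasure_iff_dist] at *
  intro ε hε
  have hc : 0 < ‖c‖ + 1 := by positivity
  refine tendsto_of_tendsto_of_tendsto_of_le_of_le tendsto_const_nhds (hf _ (div_pos hε hc))
    (fun _ => zero_le) fun i => measure_mono fun x hx => ?_
  simp only [Set.mem_ofPred_eq, Pi.smul_apply, dist_smul₀] at hx ⊢
  rw [div_le_iff₀ hc]
  nlinarith [dist_nonneg (x := f i x) (y := F x)]

end ConvergenceInMeasure

theorem UnifIntegrable.const_smul {ι 𝕜 : Type*} [NormedField 𝕜] [NormedSpace 𝕜 E]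
    {f : ι → Ω → E} {p : ℝ≥0∞} (hf : UnifIntegrable f p μ) (c : 𝕜) :
    UnifIntegrable (c • f) p μ := by
  intro ε hε
  have hc : 0 < ‖c‖ + 1 := by positivity
  obtain ⟨δ, hδ, H⟩ := hf (div_pos hε hc)
  refine ⟨δ, hδ, fun i A hA hμA => ?_⟩
  calc eLpNorm (A.indicator ((c • f) i)) p μ = ‖c‖ₑ * eLpNorm (A.indicator (f i)) p μ := by
        rw [← eLpNorm_const_smul]
        exact congrArg (eLpNorm · p μ) (Set.indicator_const_smul A c (f i))
    _ ≤ ENNReal.ofReal ‖c‖ * ENNReal.ofReal (ε / (‖c‖ + 1)) := by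
        rw [ofReal_norm]; gcongr; exact H i A hA hμA
    _ ≤ ENNReal.ofReal ε := by
        rw [← ENNReal.ofReal_mul (norm_nonneg c)]
        refine ENNReal.ofReal_le_ofReal ?_
        rw [mul_div_assoc', div_le_iff₀ hc]
        nlinarith

section UnifIntegrable

variable {f : ℕ → Ω → E} {g : Ω → E}

/-- Off a set of small measure, `f n` stays within `2` of `f N`; on that set the uniform
integrability bounds its mass by `1`. -/
theorem UnifIntegrable.exists_eLpNorm_le (hf : ∀ n, StronglyMeasurable (f n))
    (hui : UnifIntegrable f 1 μ) (hfg : TendstoInMeasure μ f atTop g) :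
    ∃ N, ∀ n ≥ N, eLpNorm (f n) 1 μ ≤ 1 + eLpNorm (f N) 1 μ + 2 * μ Set.univ := by
  obtain ⟨δ, hδ, hsmall⟩ := hui one_pos
  have hδ2 : (0 : ℝ≥0∞) < ENNReal.ofReal δ / 2 :=
    ENNReal.half_pos (ENNReal.ofReal_pos.mpr hδ).ne'
  obtain ⟨N, hN⟩ := eventually_atTop.mp
    (((tendstoInMeasure_iff_dist.mp hfg) 1 one_pos).eventually (ge_mem_nhds hδ2))
  refine ⟨N, fun n hn => ?_⟩
  set A := {x | 2 ≤ dist (f n x) (f N x)}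
  have hA : MeasurableSet A := measurableSet_le measurable_const ((hf n).dist (hf N)).measurable
  have hμA : μ A ≤ ENNReal.ofReal δ := by
    calc μ A ≤ μ {x | 1 ≤ dist (f n x) (g x)} + μ {x | 1 ≤ dist (f N x) (g x)} := by
          refine (measure_mono fun x hx => ?_).trans (measure_union_le _ _)
          by_contra! hx'
          have := dist_triangle_right (f n x) (f N x) (g x)
          simp only [A, Set.mem_union, Set.mem_ofPred_eq, not_or, not_le] at hx hx'
          linarith [hx'.1, hx'.2]
      _ ≤ ENNReal.ofReal δ / 2 + ENNReal.ofReal δ / 2 := add_le_add (hN n hn) (hN N le_rfl)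
      _ = ENNReal.ofReal δ := ENNReal.add_halves _
  have hAc : ∀ x ∈ Aᶜ, ‖f n x‖ₑ ≤ ‖f N x‖ₑ + 2 := by
    intro x hx
    simp only [A, Set.mem_compl_iff, Set.mem_ofPred_eq, not_le] at hx
    calc ‖f n x‖ₑ ≤ ‖f N x‖ₑ + ‖f n x - f N x‖ₑ := by
          simpa using enorm_add_le (f N x) (f n x - f N x)
      _ ≤ ‖f N x‖ₑ + 2 := by
          gcongr
          rw [← ofReal_norm, ← dist_eq_norm]
          exact ENNReal.ofReal_le_of_le_toReal (by simpa using hx.le)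
  rw [eLpNorm_one_eq_lintegral_enorm, eLpNorm_one_eq_lintegral_enorm,
    ← lintegral_add_compl _ hA, add_assoc]
  gcongr
  · simpa [eLpNorm_indicator_eq_eLpNorm_restrict hA, eLpNorm_one_eq_lintegral_enorm]
      using hsmall n A hA hμA
  · calc ∫⁻ x in Aᶜ, ‖f n x‖ₑ ∂μ ≤ ∫⁻ x in Aᶜ, ‖f N x‖ₑ + 2 ∂μ := setLIntegral_mono' hA.compl hAc
      _ ≤ ∫⁻ x, ‖f N x‖ₑ + 2 ∂μ := setLIntegral_le_lintegral _ _
      _ = ∫⁻ x, ‖f N x‖ₑ ∂μ + 2 * μ Set.univ := by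
          rw [lintegral_add_right _ measurable_const, lintegral_const]

theorem UnifIntegrable.integrable_of_tendstoInMeasure [IsFiniteMeasure μ]
    (hf : ∀ n, StronglyMeasurable (f n)) (hf_int : ∀ n, Integrable (f n) μ)
    (hui : UnifIntegrable f 1 μ) (hfg : TendstoInMeasure μ f atTop g) : Integrable g μ := by
  obtain ⟨N, hN⟩ := hui.exists_eLpNorm_le hf hfg
  refine memLp_one_iff_integrable.mp ⟨hfg.aestronglyMeasurable fun n => (hf n).aestronglyMeasurable,
    (eLpNorm_le_of_tendstoInMeasure (eventually_atTop.mpr ⟨N, hN⟩) hfg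
      fun n => (hf n).aestronglyMeasurable).trans_lt ?_⟩
  have := (memLp_one_iff_integrable.mpr (hf_int N)).eLpNorm_lt_top
  finiteness

theorem tendsto_integral_of_tendstoInMeasure [NormedSpace ℝ E] [CompleteSpace E]
    [IsFiniteMeasure μ] (hf : ∀ n, Integrable (f n) μ) (hg : Integrable g μ)
    (hui : UnifIntegrable f 1 μ) (hfg : TendstoInMeasure μ f atTop g) :
    Tendsto (fun n => ∫ x, f n x ∂μ) atTop (𝓝 (∫ x, g x ∂μ)) :=
  tendsto_integral_of_L1' g hg.aestronglyMeasurable (Eventually.of_forall hf)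
    (tendsto_Lp_finite_of_tendstoInMeasure le_rfl ENNReal.one_ne_top
      (fun n => (hf n).aestronglyMeasurable) (memLp_one_iff_integrable.mpr hg) hui hfg)

end UnifIntegrable

end MeasureTheory

open MeasureTheory

section MemL

variable {Ω E : Type*} [MeasurableSpace Ω] {μ : Measure Ω} [NormedAddCommGroup E]

theorem Elementary.unifIntegrable [IsFiniteMeasure μ] {C : Set (SimpleFunc Ω E)}
    (hC : Elementary μ C) {ι : Type*} {s : ι → SimpleFunc Ω E} (hs : ∀ i, s i ∈ C) :
    UnifIntegrable (fun i => ⇑(s i)) 1 μ := by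
  intro ε hε
  obtain ⟨δ, hδ, H⟩ := hC ε hε
  refine ⟨δ / 2, half_pos hδ, fun i A hA hμA => ?_⟩
  have hlt := H (s i) (hs i) A hA (hμA.trans_lt
    ((ENNReal.ofReal_lt_ofReal_iff hδ).mpr (half_lt_self hδ)))
  rw [setIntegral_norm_eq_toReal_eLpNorm_indicator (s i).aestronglyMeasurable hA] at hlt
  have hfin := (((s i).memLp_of_isFiniteMeasure 1 μ).indicator hA).eLpNorm_ne_top
  rw [← ENNReal.ofReal_toReal hfin]
  exact ENNReal.ofReal_le_ofReal hlt.le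

theorem elementary_range_of_unifIntegrable {ι : Type*} {s : ι → SimpleFunc Ω E}
    (hs : UnifIntegrable (fun i => ⇑(s i)) 1 μ) : Elementary μ (Set.range s) := by
  intro ε hε
  obtain ⟨δ, hδ, H⟩ := hs (half_pos hε)
  refine ⟨δ, hδ, ?_⟩
  rintro _ ⟨i, rfl⟩ A hA hμA
  rw [setIntegral_norm_eq_toReal_eLpNorm_indicator (s i).aestronglyMeasurable hA]
  exact (ENNReal.toReal_le_of_le_ofReal (half_pos hε).le (H i A hA hμA.le)).trans_lt
    (half_lt_self hε)

theorem memL_iff_exists_unifIntegrable [IsFiniteMeasure μ] {f : Ω → E} :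
    MemL μ f ↔ ∃ s : ℕ → SimpleFunc Ω E, UnifIntegrable (fun n => ⇑(s n)) 1 μ ∧
      TendstoInMeasure μ (fun n => ⇑(s n)) atTop f := by
  constructor
  · rintro ⟨C, hC, s, hs, hsf⟩
    exact ⟨s, hC.unifIntegrable hs, hsf⟩
  · rintro ⟨s, hs, hsf⟩
    exact ⟨Set.range s, elementary_range_of_unifIntegrable hs, s, Set.mem_range_self, hsf⟩

variable [IsFiniteMeasure μ]

theorem memL_simpleFunc (s : SimpleFunc Ω E) : MemL μ ⇑s :=
  memL_iff_exists_unifIntegrable.mpr ⟨fun _ => s,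
    unifIntegrable_const le_rfl ENNReal.one_ne_top (s.memLp_of_isFiniteMeasure 1 μ),
    tendstoInMeasure_of_tendsto_ae (fun _ => s.aestronglyMeasurable)
      (ae_of_all _ fun _ => tendsto_const_nhds)⟩

theorem MemL.add {f g : Ω → E} (hf : MemL μ f) (hg : MemL μ g) : MemL μ (f + g) := by
  obtain ⟨s, hs, hsf⟩ := memL_iff_exists_unifIntegrable.mp hf
  obtain ⟨t, ht, htg⟩ := memL_iff_exists_unifIntegrable.mp hg
  exact memL_iff_exists_unifIntegrable.mpr ⟨s + t,
    hs.add ht le_rfl (fun n => (s n).aestronglyMeasurable) (fun n => (t n).aestronglyMeasurable),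
    hsf.add htg⟩

theorem MemL.const_smul {𝕜 : Type*} [NormedField 𝕜] [NormedSpace 𝕜 E] (c : 𝕜) {f : Ω → E}
    (hf : MemL μ f) : MemL μ (c • f) := by
  obtain ⟨s, hs, hsf⟩ := memL_iff_exists_unifIntegrable.mp hf
  exact memL_iff_exists_unifIntegrable.mpr ⟨c • s, hs.const_smul c, hsf.const_smul c⟩

theorem MemL.integrable {f : Ω → E} (hf : MemL μ f) : Integrable f μ := by
  obtain ⟨s, hs, hsf⟩ := memL_iff_exists_unifIntegrable.mp hf
  exact hs.integrable_of_tendstoInMeasure (fun n => (s n).stronglyMeasurable)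
    (fun n => (s n).integrable_of_isFiniteMeasure) hsf

theorem isIntegralExtension_integral (𝕜 : Type*) [RCLike 𝕜] [NormedSpace 𝕜 E] [NormedSpace ℝ E]
    [SMulCommClass ℝ 𝕜 E] [CompleteSpace E] :
    IsIntegralExtension 𝕜 μ (fun f : Ω → E => ∫ x, f x ∂μ) := by
  refine ⟨fun s => ?_, fun f g hf hg => ?_, fun c f _ => integral_smul c f,
    fun C hC s f hs hf hsf => ?_⟩
  · exact (s.integral_eq_integral s.integrable_of_isFiniteMeasure).symm
  · exact integral_add hf.integrable hg.integrable
  · exact tendsto_integral_of_tendstoInMeasure (fun n => (s n).integrable_of_isFiniteMeasure)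
      hf.integrable (hC.unifIntegrable hs) hsf

end MemL

theorem IsIntegralExtension.unique {Ω E 𝕜 : Type*} [MeasurableSpace Ω] {μ : Measure Ω}
    [NormedAddCommGroup E] [RCLike 𝕜] [NormedSpace 𝕜 E] [NormedSpace ℝ E] {I₁ I₂ : (Ω → E) → E}
    (h₁ : IsIntegralExtension 𝕜 μ I₁) (h₂ : IsIntegralExtension 𝕜 μ I₂) {f : Ω → E}
    (hf : MemL μ f) : I₁ f = I₂ f := by
  have ⟨C, hC, s, hs, hsf⟩ := hf
  have hI : (fun n => I₁ ⇑(s n)) = fun n => I₂ ⇑(s n) :=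
    funext fun n => (h₁.1 (s n)).trans (h₂.1 (s n)).symm
  exact tendsto_nhds_unique (hI ▸ h₁.2.2.2 C hC s f hs hf hsf) (h₂.2.2.2 C hC s f hs hf hsf)

theorem stmt12_general {Ω E : Type*} [MeasurableSpace Ω] (μ : Measure Ω)
    [IsFiniteMeasure μ] [NormedAddCommGroup E] [NormedSpace ℂ E]
    [CompleteSpace E] :
    (∀ s : SimpleFunc Ω E, MemL μ ⇑s) ∧
    (∀ f g : Ω → E, MemL μ f → MemL μ g → MemL μ (f + g)) ∧
    (∀ (c : ℂ) (f : Ω → E), MemL μ f → MemL μ (c • f)) ∧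
    (∃ I : (Ω → E) → E, IsIntegralExtension ℂ μ I) ∧
    (∀ I₁ I₂ : (Ω → E) → E, IsIntegralExtension ℂ μ I₁ →
      IsIntegralExtension ℂ μ I₂ → ∀ f : Ω → E, MemL μ f → I₁ f = I₂ f) :=
  ⟨memL_simpleFunc, fun _ _ hf hg => hf.add hg, fun c _ hf => hf.const_smul c,
    ⟨_, isIntegralExtension_integral ℂ⟩, fun _ _ h₁ h₂ _ hf => h₁.unique h₂ hf⟩

/-- `L(Ω,E)` is a vector space containing the simple maps, and there is a
unique linear extension of the simple integral to `L(Ω,E)` which is continuous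
(for convergence in measure) on the closure of each elementary set. -/
theorem stmt12 {Ω E : Type*} [MeasurableSpace Ω] (μ : Measure Ω)
    [IsFiniteMeasure μ] [NormedAddCommGroup E] [NormedSpace ℂ E]
    [CompleteSpace E] [TopologicalSpace.SeparableSpace E] :
    (∀ s : SimpleFunc Ω E, MemL μ ⇑s) ∧
    (∀ f g : Ω → E, MemL μ f → MemL μ g → MemL μ (f + g)) ∧
    (∀ (c : ℂ) (f : Ω → E), MemL μ f → MemL μ (c • f)) ∧
    (∃ I : (Ω → E) → E, IsIntegralExtension ℂ μ I) ∧
    (∀ I₁ I₂ : (Ω → E) → E, IsIntegralExtension ℂ μ I₁ →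
      IsIntegralExtension ℂ μ I₂ → ∀ f : Ω → E, MemL μ f → I₁ f = I₂ f) :=
  stmt12_general μ
end
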